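/- arXiv:2507.16689 — 5 statements merged into one kernel-verified Lean document; each statement's English description precedes it below -/
import Mathlib

section
/- Let η₁₁, η₁₂, η₂₁, η₂₂ be real numbers and let D₁₁, D₁₂, D₂₁, D₂₂ be mutually independent random variables on a probability space, each taking values in {0,1}, with P(D_{rs} = 1) = Λ(η_{rs}) for r,s ∈ {1,2}. Define Z = ((D₁₁ − D₁₂) − (D₂₁ − D₂₂))/2. Then the event {Z ∈ {−1, +1}} has positive probability, and the conditional probability P(Z = 1 | Z ∈ {−1, +1}) = Λ(η₁₁ + η₂₂ − η₁₂ − η₂₁). -/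
open MeasureTheory ProbabilityTheory

/-- The standard logistic CDF `Λ(z) = e^z / (1 + e^z)`. -/
noncomputable def logistic (z : ℝ) : ℝ := Real.exp z / (1 + Real.exp z)

/-! By independence, `P(Z = 1) = Λ(η₁₁) Λ(-η₁₂) Λ(-η₂₁) Λ(η₂₂)` and
`P(Z = -1) = Λ(-η₁₁) Λ(η₁₂) Λ(η₂₁) Λ(-η₂₂)`, using `1 - Λ(z) = Λ(-z)`. Since
`Λ(z) = e^z Λ(-z)`, the first is `e^a` times the second, with `a = η₁₁ + η₂₂ - η₁₂ - η₂₁`,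
and `x / (x + y) = Λ(a)` whenever `x = e^a y`. -/

lemma logistic_pos (z : ℝ) : 0 < logistic z := by
  unfold logistic; positivity

lemma logistic_neg (z : ℝ) : logistic (-z) = 1 - logistic z := by
  unfold logistic
  rw [Real.exp_neg]
  field_simp
  ring

lemma logistic_eq_exp_mul_logistic_neg (z : ℝ) : logistic z = Real.exp z * logistic (-z) := by
  unfold logistic
  rw [Real.exp_neg]
  field_simp
  ring

lemma div_add_eq_logistic {x y a : ℝ} (hy : 0 < y) (hx : x = Real.exp a * y) :
    x / (x + y) = logistic a := by
  subst hx
  unfold logistic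
  rw [← add_one_mul, mul_div_mul_right _ _ hy.ne', add_comm (Real.exp a)]

lemma logistic_tetrad_eq_exp_mul (a b c d : ℝ) :
    logistic a * logistic (-b) * logistic (-c) * logistic d
      = Real.exp (a + d - b - c) * (logistic (-a) * logistic b * logistic c * logistic (-d)) := by
  rw [logistic_eq_exp_mul_logistic_neg a, logistic_eq_exp_mul_logistic_neg b,
    logistic_eq_exp_mul_logistic_neg c, logistic_eq_exp_mul_logistic_neg d,
    Real.exp_sub, Real.exp_sub, Real.exp_add]
  field_simp

lemma tetrad_eq_one_iff {a b c d : ℝ} (ha : a = 0 ∨ a = 1) (hb : b = 0 ∨ b = 1)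
    (hc : c = 0 ∨ c = 1) (hd : d = 0 ∨ d = 1) :
    ((a - b) - (c - d)) / 2 = 1 ↔ a = 1 ∧ b = 0 ∧ c = 0 ∧ d = 1 := by
  rcases ha with rfl | rfl <;> rcases hb with rfl | rfl <;> rcases hc with rfl | rfl <;>
    rcases hd with rfl | rfl <;> norm_num

lemma tetrad_eq_neg_one_iff {a b c d : ℝ} (ha : a = 0 ∨ a = 1) (hb : b = 0 ∨ b = 1)
    (hc : c = 0 ∨ c = 1) (hd : d = 0 ∨ d = 1) :
    ((a - b) - (c - d)) / 2 = -1 ↔ a = 0 ∧ b = 1 ∧ c = 1 ∧ d = 0 := by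
  rcases ha with rfl | rfl <;> rcases hb with rfl | rfl <;> rcases hc with rfl | rfl <;>
    rcases hd with rfl | rfl <;> norm_num

section Probability

variable {Ω : Type*} [MeasurableSpace Ω] {P : Measure Ω}

lemma measure_setOf_eq_zero_of_logistic [IsProbabilityMeasure P] {X : Ω → ℝ} (hX : Measurable X)
    (h01 : ∀ ω, X ω = 0 ∨ X ω = 1) {z : ℝ}
    (h1 : P {ω | X ω = 1} = ENNReal.ofReal (logistic z)) :
    P {ω | X ω = 0} = ENNReal.ofReal (logistic (-z)) := by
  have hcompl : {ω | X ω = 0} = {ω | X ω = 1}ᶜ := by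
    ext ω
    rcases h01 ω with h | h <;> simp [h]
  have hm1 : MeasurableSet {ω | X ω = 1} := hX (measurableSet_singleton 1)
  rw [hcompl, prob_compl_eq_one_sub hm1, h1, logistic_neg,
    ENNReal.ofReal_sub _ (logistic_pos z).le, ENNReal.ofReal_one]

lemma iIndepFun.measure_setOf_forall_eq {ι : Type*} [Fintype ι] {X : ι → Ω → ℝ}
    (hindep : iIndepFun X P) (v : ι → ℝ) :
    P {ω | ∀ i, X i ω = v i} = ∏ i, P {ω | X i ω = v i} := by
  have h := hindep.measure_inter_preimage_eq_mul Finset.univ (sets := fun i => {v i})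
    (fun i _ => measurableSet_singleton _)
  simpa [Set.preimage, Set.ofPred_forall] using h

lemma measure_tetrad_cell {D : Fin 2 → Fin 2 → Ω → ℝ}
    (hindep : iIndepFun (fun p : Fin 2 × Fin 2 => D p.1 p.2) P) (a b c d : ℝ) :
    P {ω | D 0 0 ω = a ∧ D 0 1 ω = b ∧ D 1 0 ω = c ∧ D 1 1 ω = d}
      = P {ω | D 0 0 ω = a} * P {ω | D 0 1 ω = b} * P {ω | D 1 0 ω = c}
          * P {ω | D 1 1 ω = d} := by
  have h := iIndepFun.measure_setOf_forall_eq hindep (fun p => ![![a, b], ![c, d]] p.1 p.2)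
  simp only [Prod.forall, Fin.forall_fin_two, Fintype.prod_prod_type, Fin.prod_univ_two] at h
  simpa [and_assoc, mul_assoc] using h

lemma cond_union_left_eq_ofReal {A B : Set Ω} (hA : MeasurableSet A) (hB : MeasurableSet B)
    (hAB : Disjoint A B) {x y : ℝ} (hx : 0 ≤ x) (hy : 0 < y)
    (hPA : P A = ENNReal.ofReal x) (hPB : P B = ENNReal.ofReal y) :
    0 < P (A ∪ B) ∧ P[|A ∪ B] A = ENNReal.ofReal (x / (x + y)) := by
  have hPAB : P (A ∪ B) = ENNReal.ofReal (x + y) := by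
    rw [measure_union hAB hB, hPA, hPB, ENNReal.ofReal_add hx hy.le]
  refine ⟨hPAB ▸ ENNReal.ofReal_pos.mpr (by positivity), ?_⟩
  rw [cond_apply (hA.union hB), Set.union_inter_cancel_left, hPAB, hPA,
    ENNReal.ofReal_div_of_pos (by positivity), ENNReal.div_eq_inv_mul]

end Probability

theorem tetrad_conditional_prob
    {Ω : Type*} [MeasurableSpace Ω] (P : Measure Ω) [IsProbabilityMeasure P]
    (η : Fin 2 → Fin 2 → ℝ) (D : Fin 2 → Fin 2 → Ω → ℝ)
    (hmeas : ∀ r s, Measurable (D r s))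
    (hval : ∀ r s ω, D r s ω = 0 ∨ D r s ω = 1)
    (hindep : iIndepFun
      (fun p : Fin 2 × Fin 2 => D p.1 p.2) P)
    (hprob : ∀ r s, P {ω | D r s ω = 1} = ENNReal.ofReal (logistic (η r s)))
    (Z : Ω → ℝ)
    (hZ : ∀ ω, Z ω = ((D 0 0 ω - D 0 1 ω) - (D 1 0 ω - D 1 1 ω)) / 2) :
    0 < P {ω | Z ω = 1 ∨ Z ω = -1} ∧
      P[|{ω | Z ω = 1 ∨ Z ω = -1}] {ω | Z ω = 1}
        = ENNReal.ofReal (logistic (η 0 0 + η 1 1 - η 0 1 - η 1 0)) := by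
  have hprob0 r s := measure_setOf_eq_zero_of_logistic (hmeas r s) (hval r s) (hprob r s)
  have hZm : Measurable Z := by
    rw [funext hZ]
    fun_prop
  have hlog := logistic_pos
  have hplus : P {ω | Z ω = 1} = ENNReal.ofReal (logistic (η 0 0) * logistic (-η 0 1)
      * logistic (-η 1 0) * logistic (η 1 1)) := by
    simp only [hZ, tetrad_eq_one_iff (hval 0 0 _) (hval 0 1 _) (hval 1 0 _) (hval 1 1 _)]
    rw [measure_tetrad_cell hindep, hprob, hprob0, hprob0, hprob, ENNReal.ofReal_mul',
      ENNReal.ofReal_mul', ENNReal.ofReal_mul'] <;> exact (hlog _).le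
  have hminus : P {ω | Z ω = -1} = ENNReal.ofReal (logistic (-η 0 0) * logistic (η 0 1)
      * logistic (η 1 0) * logistic (-η 1 1)) := by
    simp only [hZ, tetrad_eq_neg_one_iff (hval 0 0 _) (hval 0 1 _) (hval 1 0 _) (hval 1 1 _)]
    rw [measure_tetrad_cell hindep, hprob0, hprob, hprob, hprob0, ENNReal.ofReal_mul',
      ENNReal.ofReal_mul', ENNReal.ofReal_mul'] <;> exact (hlog _).le
  have hdisj : Disjoint {ω | Z ω = 1} {ω | Z ω = -1} :=
    Set.disjoint_left.mpr fun ω (h1 : Z ω = 1) h2 => by norm_num [h1] at h2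
  have hy := mul_pos (mul_pos (mul_pos (hlog (-η 0 0)) (hlog (η 0 1))) (hlog (η 1 0)))
    (hlog (-η 1 1))
  have hratio := logistic_tetrad_eq_exp_mul (η 0 0) (η 0 1) (η 1 0) (η 1 1)
  rw [Set.ofPred_or, ← div_add_eq_logistic hy hratio]
  exact cond_union_left_eq_ofReal (hZm (measurableSet_singleton 1))
    (hZm (measurableSet_singleton (-1))) hdisj (hratio ▸ by positivity) hy hplus hminus
end

section
/- (Sufficiency in the model with category-specific sender and receiver effects.) Fix β ∈ ℝ^k, covariate vectors x₁₁, x₁₂, x₂₁, x₂₂ ∈ ℝ^k, sender effects λ₁, λ₂ ∈ ℝ and receiver effects δ₁, δ₂ ∈ ℝ. Let D₁₁, D₁₂, D₂₁, D₂₂ be mutually independent random variables valued in {0,1} with P(D_{rs} = 1) = Λ(⟨x_{rs}, β⟩ − λ_r − δ_s) for r,s ∈ {1,2}, and set Z = ((D₁₁ − D₁₂) − (D₂₁ − D₂₂))/2 and r = (x₁₁ − x₁₂) − (x₂₁ − x₂₂). Then P(Z = 1 | Z ∈ {−1, +1}) = Λ(⟨r, β⟩); in particular this conditional probability does not depend on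 λ₁, λ₂, δ₁, δ₂. -/
/-! Given `Z ∈ {±1}`, the tetrad `(D₁₁, D₁₂, D₂₁, D₂₂)` is either `(1,0,0,1)` or `(0,1,1,0)`.
Since `1 - Λ(z) = Λ(-z)` and `Λ(z) = e^z Λ(-z)`, the probabilities of these two patterns differ
by the factor `exp (a₁₁ - a₁₂ - a₂₁ + a₂₂)` with `a_rs = ⟪x_rs, β⟫ - λ_r - δ_s`; the sender and
receiver effects cancel in this exponent, which is `⟪r, β⟫`, and odds `e^⟪r, β⟫` mean a conditional
probability `Λ(⟪r, β⟫)`. -/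

open MeasureTheory ProbabilityTheory
open scoped RealInnerProductSpace

open Finset Real

lemma logistic_eq_sigmoid : logistic = sigmoid := by
  funext z
  rw [logistic, sigmoid_def, exp_neg]
  field_simp
  ring

namespace Real

lemma sigmoid_eq_exp_mul_sigmoid_neg (x : ℝ) : sigmoid x = exp x * sigmoid (-x) := by
  rw [← sigmoid_mul_rexp_neg, mul_left_comm, ← exp_add, add_neg_cancel, exp_zero, mul_one]

lemma prod_sigmoid_eq_exp_sum_mul_prod_sigmoid_neg {ι : Type*} (s : Finset ι) (f : ι → ℝ) :
    ∏ i ∈ s, sigmoid (f i) = exp (∑ i ∈ s, f i) * ∏ i ∈ s, sigmoid (-f i) := by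
  rw [exp_sum, ← prod_mul_distrib]
  exact prod_congr rfl fun i _ ↦ sigmoid_eq_exp_mul_sigmoid_neg (f i)

lemma sigmoid_eq_div_add {p q x : ℝ} (hq : 0 < q) (hpq : p = exp x * q) :
    sigmoid x = p / (p + q) := by
  rw [hpq, sigmoid_def, exp_neg]
  field_simp

lemma ofReal_sigmoid_eq_div_add {p q x : ℝ} (hq : 0 < q) (hpq : p = exp x * q) :
    ENNReal.ofReal (sigmoid x) = ENNReal.ofReal p / (ENNReal.ofReal p + ENNReal.ofReal q) := by
  have hp : 0 < p := hpq ▸ mul_pos (exp_pos x) hq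
  rw [sigmoid_eq_div_add hq hpq, ENNReal.ofReal_div_of_pos (add_pos hp hq),
    ENNReal.ofReal_add hp.le hq.le]

end Real

section Tetrad

variable {Ω : Type*} {D : Fin 2 → Fin 2 → Ω → ℝ} {Z : Ω → ℝ}

lemma setOf_tetrad_eq_one (hval : ∀ r s ω, D r s ω = 0 ∨ D r s ω = 1)
    (hZ : ∀ ω, Z ω = ((D 0 0 ω - D 0 1 ω) - (D 1 0 ω - D 1 1 ω)) / 2) :
    {ω | Z ω = 1} = {ω | ∀ p : Fin 2 × Fin 2, D p.1 p.2 ω = if p.1 = p.2 then 1 else 0} := by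
  ext ω
  simp only [Set.mem_ofPred_eq, hZ, Prod.forall, Fin.forall_fin_two]
  rcases hval 0 0 ω with h₀₀ | h₀₀ <;> rcases hval 0 1 ω with h₀₁ | h₀₁ <;>
    rcases hval 1 0 ω with h₁₀ | h₁₀ <;> rcases hval 1 1 ω with h₁₁ | h₁₁ <;>
    norm_num [h₀₀, h₀₁, h₁₀, h₁₁]

lemma setOf_tetrad_eq_neg_one (hval : ∀ r s ω, D r s ω = 0 ∨ D r s ω = 1)
    (hZ : ∀ ω, Z ω = ((D 0 0 ω - D 0 1 ω) - (D 1 0 ω - D 1 1 ω)) / 2) :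
    {ω | Z ω = -1} = {ω | ∀ p : Fin 2 × Fin 2, D p.1 p.2 ω = if ¬p.1 = p.2 then 1 else 0} := by
  ext ω
  simp only [Set.mem_ofPred_eq, hZ, Prod.forall, Fin.forall_fin_two]
  rcases hval 0 0 ω with h₀₀ | h₀₀ <;> rcases hval 0 1 ω with h₀₁ | h₀₁ <;>
    rcases hval 1 0 ω with h₁₀ | h₁₀ <;> rcases hval 1 1 ω with h₁₁ | h₁₁ <;>
    norm_num [h₀₀, h₀₁, h₁₀, h₁₁]

end Tetrad

namespace ProbabilityTheory

variable {Ω : Type*} [MeasurableSpace Ω] {P : Measure Ω}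

theorem iIndepFun.measure_setOf_forall_eq {ι β : Type*} [Fintype ι] [MeasurableSpace β]
    [MeasurableSingletonClass β] {X : ι → Ω → β} (h : iIndepFun X P) (v : ι → β) :
    P {ω | ∀ i, X i ω = v i} = ∏ i, P {ω | X i ω = v i} := by
  have hinter : {ω | ∀ i, X i ω = v i} = ⋂ i ∈ univ, X i ⁻¹' {v i} := by ext; simp
  exact hinter ▸ h.measure_inter_preimage_eq_mul univ fun i _ ↦ measurableSet_singleton _

lemma measure_setOf_eq_zero_of_zero_one [IsProbabilityMeasure P] {D : Ω → ℝ} (hD : Measurable D)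
    (hval : ∀ ω, D ω = 0 ∨ D ω = 1) {p : ℝ} (hp : 0 ≤ p)
    (h1 : P {ω | D ω = 1} = ENNReal.ofReal p) :
    P {ω | D ω = 0} = ENNReal.ofReal (1 - p) := by
  have hcompl : {ω | D ω = 0} = {ω | D ω = 1}ᶜ := by
    ext ω
    rcases hval ω with h | h <;> simp [h]
  rw [hcompl, prob_compl_eq_one_sub (measurableSet_eq_fun hD measurable_const), h1,
    ← ENNReal.ofReal_one, ENNReal.ofReal_sub _ hp]

lemma measure_setOf_forall_eq_ite [IsProbabilityMeasure P] {ι : Type*} [Fintype ι]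
    {D : ι → Ω → ℝ} (hindep : iIndepFun D P) (hmeas : ∀ i, Measurable (D i))
    (hval : ∀ i ω, D i ω = 0 ∨ D i ω = 1) {a : ι → ℝ}
    (hprob : ∀ i, P {ω | D i ω = 1} = ENNReal.ofReal (sigmoid (a i)))
    (S : ι → Prop) [DecidablePred S] :
    P {ω | ∀ i, D i ω = if S i then 1 else 0}
      = ENNReal.ofReal (∏ i, sigmoid (if S i then a i else -a i)) := by
  rw [hindep.measure_setOf_forall_eq, ENNReal.ofReal_prod_of_nonneg fun i _ ↦ sigmoid_nonneg _]
  refine prod_congr rfl fun i _ ↦ ?_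
  split_ifs
  · exact hprob i
  · rw [sigmoid_neg]
    exact measure_setOf_eq_zero_of_zero_one (hmeas i) (hval i) (sigmoid_nonneg _) (hprob i)

lemma cond_union_left_of_disjoint {A B : Set Ω} (hA : MeasurableSet A) (hB : MeasurableSet B)
    (hAB : Disjoint A B) : P[|A ∪ B] A = P A / (P A + P B) := by
  rw [cond_apply (hA.union hB), Set.union_inter_cancel_left, measure_union hAB hB,
    ENNReal.div_eq_inv_mul]

lemma cond_setOf_eq_or_eq {α : Type*} [MeasurableSpace α] [MeasurableSingletonClass α]
    {Z : Ω → α} (hZ : Measurable Z) {u v : α} (huv : u ≠ v) :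
    P[|{ω | Z ω = u ∨ Z ω = v}] {ω | Z ω = u}
      = P {ω | Z ω = u} / (P {ω | Z ω = u} + P {ω | Z ω = v}) := by
  rw [Set.ofPred_or]
  exact cond_union_left_of_disjoint (hZ (measurableSet_singleton u))
    (hZ (measurableSet_singleton v)) (Set.disjoint_left.mpr fun ω h₁ h₂ ↦ huv (h₁.symm.trans h₂))

end ProbabilityTheory

/-- Sufficiency in the ordered-logit network model with category-specific
sender effects `lam` and receiver effects `δ`, at a common cutoff. -/
theorem sufficiency_sender_receiver_effects
    {Ω : Type*} [MeasurableSpace Ω] (P : Measure Ω) [IsProbabilityMeasure P]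
    (k : ℕ) (β : EuclideanSpace ℝ (Fin k))
    (x : Fin 2 → Fin 2 → EuclideanSpace ℝ (Fin k))
    (lam : Fin 2 → ℝ) (δ : Fin 2 → ℝ)
    (D : Fin 2 → Fin 2 → Ω → ℝ)
    (hmeas : ∀ r s, Measurable (D r s))
    (hval : ∀ r s ω, D r s ω = 0 ∨ D r s ω = 1)
    (hindep : iIndepFun
      (fun p : Fin 2 × Fin 2 => D p.1 p.2) P)
    (hprob : ∀ r s, P {ω | D r s ω = 1}
      = ENNReal.ofReal (logistic (⟪x r s, β⟫ - lam r - δ s)))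
    (Z : Ω → ℝ)
    (hZ : ∀ ω, Z ω = ((D 0 0 ω - D 0 1 ω) - (D 1 0 ω - D 1 1 ω)) / 2)
    (r : EuclideanSpace ℝ (Fin k))
    (hr : r = (x 0 0 - x 0 1) - (x 1 0 - x 1 1)) :
    P[|{ω | Z ω = 1 ∨ Z ω = -1}] {ω | Z ω = 1}
      = ENNReal.ofReal (logistic ⟪r, β⟫) := by
  rw [logistic_eq_sigmoid] at hprob ⊢
  set a : Fin 2 × Fin 2 → ℝ := fun p ↦ ⟪x p.1 p.2, β⟫ - lam p.1 - δ p.2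
  set t : Fin 2 × Fin 2 → ℝ := fun p ↦ if p.1 = p.2 then a p else -a p
  have hZm : Measurable Z := by
    rw [funext hZ]
    fun_prop
  have hplus : P {ω | Z ω = 1} = ENNReal.ofReal (∏ p, sigmoid (t p)) := by
    rw [setOf_tetrad_eq_one hval hZ]
    exact measure_setOf_forall_eq_ite hindep (fun _ ↦ hmeas _ _) (fun _ ↦ hval _ _)
      (a := a) (fun _ ↦ hprob _ _) _
  have hminus : P {ω | Z ω = -1} = ENNReal.ofReal (∏ p, sigmoid (-t p)) := by
    rw [setOf_tetrad_eq_neg_one hval hZ, measure_setOf_forall_eq_ite hindep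
      (fun _ ↦ hmeas _ _) (fun _ ↦ hval _ _) (a := a) (fun _ ↦ hprob _ _) _]
    simp only [t, ite_not, neg_ite, neg_neg]
  have hsum : ∑ p, t p = ⟪r, β⟫ := by
    simp only [t, a, hr, inner_sub_left, Fintype.sum_prod_type, Fin.sum_univ_two]
    norm_num
    ring
  rw [cond_setOf_eq_or_eq hZm (by norm_num), hplus, hminus]
  exact (ofReal_sigmoid_eq_div_add (prod_pos fun p _ ↦ sigmoid_pos _)
    (hsum ▸ prod_sigmoid_eq_exp_sum_mul_prod_sigmoid_neg _ _)).symm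
end

section
/- (Necessity of a common cutoff in the model with category-specific sender and receiver effects.) Let M ≥ 1 and m₁₁, m₁₂, m₂₁, m₂₂ ∈ {1,…,M}. The difference-in-differences of fixed effects Δλ = ((λ₁(m₁₁) + δ₁(m₁₁)) − (λ₁(m₁₂) + δ₂(m₁₂))) − ((λ₂(m₂₁) + δ₁(m₂₁)) − (λ₂(m₂₂) + δ₂(m₂₂))) equals zero for ALL functions λ₁, λ₂, δ₁, δ₂ : {1,…,M} → ℝ if and only if m₁₁ = m₁₂ = m₂₁ = m₂₂. -/
/-! Each cutoff equality is forced by a single choice of fixed effects: taking one threshold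
function to be an arbitrary `f` and all others zero reduces `Δλ = 0` to `f a = f b` for two of
the cutoffs, and a function separating `a` from `b` exists unless `a = b`. -/

theorem eq_of_forall_apply_eq {α β : Type*} [Nontrivial β] {a b : α}
    (h : ∀ f : α → β, f a = f b) : a = b := by
  classical
  obtain ⟨x, y, hxy⟩ := exists_pair_ne β
  by_contra hab
  have := h fun z => if z = a then x else y
  simp [Ne.symm hab] at this
  exact hxy this

theorem common_cutoff_necessity_general (M : ℕ) (m : Fin 2 → Fin 2 → Fin M) :
    (∀ lam δ : Fin 2 → Fin M → ℝ,
        ((lam 0 (m 0 0) + δ 0 (m 0 0)) - (lam 0 (m 0 1) + δ 1 (m 0 1)))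
          - ((lam 1 (m 1 0) + δ 0 (m 1 0)) - (lam 1 (m 1 1) + δ 1 (m 1 1))) = 0)
      ↔ (m 0 0 = m 0 1 ∧ m 0 1 = m 1 0 ∧ m 1 0 = m 1 1) := by
  constructor
  · intro h
    have first_sender : m 0 0 = m 0 1 :=
      eq_of_forall_apply_eq fun f => by simpa [sub_eq_zero] using h ![f, 0] 0
    have second_sender : m 1 0 = m 1 1 :=
      (eq_of_forall_apply_eq fun f => by simpa [sub_eq_zero] using h ![0, f] 0).symm
    have first_receiver : m 0 0 = m 1 0 :=
      eq_of_forall_apply_eq fun f => by simpa [sub_eq_zero] using h 0 ![f, 0]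
    exact ⟨first_sender, first_sender ▸ first_receiver, second_sender⟩
  · rintro ⟨h₁, h₂, h₃⟩ lam δ
    rw [h₁, h₂, h₃]
    ring

/-- Necessity of a common cutoff in the model with category-specific sender and
receiver effects: the difference-in-differences of fixed effects vanishes for
all sender threshold functions `lam 0, lam 1` and receiver threshold functions
`δ 0, δ 1` if and only if all four cutoffs coincide. -/
theorem common_cutoff_necessity (M : ℕ) (hM : 1 ≤ M) (m : Fin 2 → Fin 2 → Fin M) :
    (∀ lam δ : Fin 2 → Fin M → ℝ,
        ((lam 0 (m 0 0) + δ 0 (m 0 0)) - (lam 0 (m 0 1) + δ 1 (m 0 1)))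
          - ((lam 1 (m 1 0) + δ 0 (m 1 0)) - (lam 1 (m 1 1) + δ 1 (m 1 1))) = 0)
      ↔ (m 0 0 = m 0 1 ∧ m 0 1 = m 1 0 ∧ m 1 0 = m 1 1) :=
  common_cutoff_necessity_general M m
end

section
/- Let N ≥ 4, let Σ be the set of 4-tuples of pairwise distinct elements of {1,…,N}, and let (X_σ)_{σ ∈ Σ} be square-integrable real random variables on a common probability space with E[X_σ] = 0 for all σ, such that X_σ and X_{σ'} are independent whenever σ and σ' have no element in common. Then E[(Σ_{σ ∈ Σ} X_σ)²] ≤ 16·N³·Σ_{σ ∈ Σ} E[X_σ²]. -/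
/-!
With the `X σ` centred, the left side is `Var[∑ X σ] = ∑_{σ,σ'} cov[X σ, X σ']`. Covariances of
node-disjoint tetrads vanish by independence, and the others are bounded by
`2 cov[X, Y] ≤ Var[X] + Var[Y]`. Each tetrad meets at most `4 · 4 · N³` tetrads (choose the shared
node's position in each tetrad, then the three other nodes), so every variance is counted at most
`16 N³` times.
-/

open MeasureTheory ProbabilityTheory Finset

section Counting

variable {ι κ α : Type*} [Fintype ι] [DecidableEq ι] [Fintype κ] [Fintype α] [DecidableEq α]

lemma card_filter_exists_apply_eq_le (σ : κ → α) :
    #{τ : ι → α | ∃ a b, σ a = τ b}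
      ≤ Fintype.card κ * Fintype.card ι * Fintype.card α ^ (Fintype.card ι - 1) := by
  have hcover : ({τ : ι → α | ∃ a b, σ a = τ b} : Finset _) ⊆
      (univ : Finset (κ × ι)).biUnion fun p ↦ {τ : ι → α | τ p.2 = σ p.1} := by
    intro τ hτ
    obtain ⟨a, b, hab⟩ := (mem_filter.1 hτ).2
    exact mem_biUnion.2 ⟨(a, b), mem_univ _, mem_filter.2 ⟨mem_univ _, hab.symm⟩⟩
  have hfiber (b : ι) (c : α) :
      #{τ : ι → α | τ b = c} = Fintype.card α ^ (Fintype.card ι - 1) := by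
    simpa using Fintype.card_filter_piFinset_const_eq_of_mem (univ : Finset α) b (mem_univ c)
  calc _ ≤ _ := card_le_card hcover
    _ ≤ ∑ p : κ × ι, #{τ : ι → α | τ p.2 = σ p.1} := card_biUnion_le
    _ = _ := by simp [hfiber, mul_assoc]

end Counting

section Variance

variable {Ω : Type*} [MeasurableSpace Ω] {μ : Measure Ω} [IsFiniteMeasure μ]

lemma two_mul_covariance_le_variance_add_variance {X Y : Ω → ℝ} (hX : MemLp X 2 μ)
    (hY : MemLp Y 2 μ) : 2 * cov[X, Y; μ] ≤ Var[X; μ] + Var[Y; μ] := by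
  have := variance_nonneg (X - Y) μ
  rw [variance_sub hX hY] at this
  linarith

lemma variance_sum_le_of_indepFun {ι : Type*} {s : Finset ι} {X : ι → Ω → ℝ}
    (R : ι → ι → Prop) [DecidableRel R] (hR : ∀ i j, R i j → R j i) {K : ℕ}
    (hK : ∀ i ∈ s, #{j ∈ s | R i j} ≤ K) (hX : ∀ i ∈ s, MemLp (X i) 2 μ)
    (hindep : ∀ i ∈ s, ∀ j ∈ s, ¬ R i j → X i ⟂ᵢ[μ] X j) :
    Var[fun ω ↦ ∑ i ∈ s, X i ω; μ] ≤ K * ∑ i ∈ s, Var[X i; μ] := by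
  set v := fun i ↦ Var[X i; μ]
  have hcov : ∀ i ∈ s, ∀ j ∈ s,
      cov[X i, X j; μ] ≤ (if R i j then v i else 0) / 2 + (if R j i then v j else 0) / 2 := by
    intro i hi j hj
    by_cases hij : R i j
    · simp only [hij, hR i j hij, if_true]
      linarith [two_mul_covariance_le_variance_add_variance (hX i hi) (hX j hj)]
    · have hji : ¬ R j i := fun h ↦ hij (hR j i h)
      simp [hij, hji, (hindep i hi j hj hij).covariance_eq_zero (hX i hi) (hX j hj)]
  have hrow : ∀ i ∈ s, ∑ j ∈ s, (if R i j then v i else 0) ≤ K * v i := by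
    intro i hi
    rw [← sum_filter, sum_const, nsmul_eq_mul]
    exact mul_le_mul_of_nonneg_right (by exact_mod_cast hK i hi) (variance_nonneg _ _)
  calc Var[fun ω ↦ ∑ i ∈ s, X i ω; μ] = ∑ i ∈ s, ∑ j ∈ s, cov[X i, X j; μ] :=
        variance_fun_sum' hX
    _ ≤ ∑ i ∈ s, ∑ j ∈ s,
          ((if R i j then v i else 0) / 2 + (if R j i then v j else 0) / 2) :=
        sum_le_sum fun i hi ↦ sum_le_sum fun j hj ↦ hcov i hi j hj
    _ = ∑ i ∈ s, ∑ j ∈ s, (if R i j then v i else 0) := by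
        simp only [sum_add_distrib, ← sum_div]
        rw [sum_comm (f := fun i j ↦ if R j i then v j else 0)]
        ring
    _ ≤ ∑ i ∈ s, K * v i := sum_le_sum hrow
    _ = K * ∑ i ∈ s, Var[X i; μ] := (mul_sum _ _ _).symm

end Variance

open scoped Classical

theorem tetrad_sum_second_moment_bound_general
    {Ω : Type*} [MeasurableSpace Ω] (P : Measure Ω) [IsProbabilityMeasure P]
    (N : ℕ)
    (X : (Fin 4 → Fin N) → Ω → ℝ)
    (hL2 : ∀ σ, MemLp (X σ) 2 P)
    (hmean : ∀ σ, ∫ ω, X σ ω ∂P = 0)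
    (hindep : ∀ σ σ' : Fin 4 → Fin N,
      (∀ a b : Fin 4, σ a ≠ σ' b) → IndepFun (X σ) (X σ') P) :
    ∫ ω, (∑ σ ∈ Finset.univ.filter
        (fun σ : Fin 4 → Fin N => Function.Injective σ), X σ ω) ^ 2 ∂P
      ≤ 16 * (N : ℝ) ^ 3 * ∑ σ ∈ Finset.univ.filter
          (fun σ : Fin 4 → Fin N => Function.Injective σ), ∫ ω, (X σ ω) ^ 2 ∂P := by
  set S := Finset.univ.filter (fun σ : Fin 4 → Fin N => Function.Injective σ)
  have hvar : ∀ σ, Var[X σ; P] = ∫ ω, X σ ω ^ 2 ∂P :=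
    fun σ ↦ variance_of_integral_eq_zero (hL2 σ).aemeasurable (hmean σ)
  have hvar_sum : Var[fun ω ↦ ∑ σ ∈ S, X σ ω; P] = ∫ ω, (∑ σ ∈ S, X σ ω) ^ 2 ∂P := by
    refine variance_of_integral_eq_zero (memLp_finsetSum S fun σ _ ↦ hL2 σ).aemeasurable ?_
    rw [integral_finsetSum S fun σ _ ↦ (hL2 σ).integrable one_le_two]
    simp [hmean]
  have hK : ∀ σ ∈ S, #{σ' ∈ S | ∃ a b, σ a = σ' b} ≤ 16 * N ^ 3 := fun σ _ ↦ by
    refine ((card_le_card fun τ ↦ ?_).trans (card_filter_exists_apply_eq_le σ)).trans_eq (by simp)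
    simp +contextual
  have := variance_sum_le_of_indepFun (μ := P) (X := X) (fun σ σ' ↦ ∃ a b, σ a = σ' b)
    (fun _ _ ⟨a, b, h⟩ ↦ ⟨b, a, h.symm⟩) hK (fun σ _ ↦ hL2 σ)
    (fun σ _ σ' _ h ↦ hindep σ σ' (by simpa using h))
  simpa [← hvar_sum, hvar] using this

/-- Second-moment bound for sums of centered tetrad-level statistics that are
independent across node-disjoint tetrads: the second moment of the sum is at
most `16 N³` times the sum of the individual second moments. -/
theorem tetrad_sum_second_moment_bound
    {Ω : Type*} [MeasurableSpace Ω] (P : Measure Ω) [IsProbabilityMeasure P]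
    (N : ℕ) (hN : 4 ≤ N)
    (X : (Fin 4 → Fin N) → Ω → ℝ)
    (hmeas : ∀ σ, Measurable (X σ))
    (hL2 : ∀ σ, MemLp (X σ) 2 P)
    (hmean : ∀ σ, ∫ ω, X σ ω ∂P = 0)
    (hindep : ∀ σ σ' : Fin 4 → Fin N,
      (∀ a b : Fin 4, σ a ≠ σ' b) → IndepFun (X σ) (X σ') P) :
    ∫ ω, (∑ σ ∈ Finset.univ.filter
        (fun σ : Fin 4 → Fin N => Function.Injective σ), X σ ω) ^ 2 ∂P
      ≤ 16 * (N : ℝ) ^ 3 * ∑ σ ∈ Finset.univ.filter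
          (fun σ : Fin 4 → Fin N => Function.Injective σ), ∫ ω, (X σ ω) ^ 2 ∂P :=
  tetrad_sum_second_moment_bound_general P N X hL2 hmean hindep
end

section
/- Let N ≥ 4 and M ≥ 1, let Σ be the set of 4-tuples of pairwise distinct elements of {1,…,N}, and let (X_{σ,m})_{σ ∈ Σ, m ∈ {1,…,M}} be square-integrable real random variables on a common probability space with E[X_{σ,m}] = 0 for all (σ, m), such that X_{σ,m} and X_{σ',m'} are independent for all m, m' whenever σ and σ' have no element in common. Then E[(Σ_{m=1}^{M} Σ_{σ ∈ Σ} X_{σ,m})²] ≤ 16·M·N³·Σ_{m=1}^{M} Σ_{σ ∈ Σ} E[X_{σ,m}²]. -/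
open MeasureTheory ProbabilityTheory
open scoped Classical

open Finset Function

/-!
Expanding the square, the cross moment of two tetrad–cutoff terms vanishes when the tetrads
are node-disjoint (independence and centering) and is at most the mean of the two second
moments otherwise (AM–GM). A tetrad shares a node with at most `4 · 4 · N³` tetrads, since
choosing which node of one equals which node of the other leaves three free nodes; so each term
overlaps at most `16 M N³` terms, and by symmetry of the overlap relation the AM–GM bounds add
up to at most `16 M N³` times the total second moment.
-/

def SharesNode {α β : Type*} (σ τ : α → β) : Prop := ∃ a b, σ a = τ b

instance {α β : Type*} : Std.Symm (SharesNode (α := α) (β := β)) :=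
  ⟨fun _ _ ⟨a, b, h⟩ => ⟨b, a, h.symm⟩⟩

theorem card_filter_sharesNode_le {α β : Type*} [Fintype α] [DecidableEq α] [Fintype β]
    (σ : α → β) :
    #{f : α → β | SharesNode σ f}
      ≤ Fintype.card α * Fintype.card α * Fintype.card β ^ (Fintype.card α - 1) := by
  have hfix : ∀ a b, #{f : α → β | f a = b} = Fintype.card β ^ (Fintype.card α - 1) := by
    intro a b
    simpa [Fintype.piFinset_univ] using
      Fintype.card_filter_piFinset_const_eq_of_mem (univ : Finset β) a (mem_univ b)
  calc #{f : α → β | SharesNode σ f}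
      ≤ #((univ ×ˢ univ : Finset (α × α)).biUnion
          fun ca => {f : α → β | f ca.2 = σ ca.1}) := by
        refine card_le_card fun f hf => ?_
        obtain ⟨c, a, hca⟩ := (mem_filter.1 hf).2
        exact mem_biUnion.2 ⟨(c, a), by simp, by simp [hca]⟩
    _ ≤ ∑ ca ∈ (univ ×ˢ univ : Finset (α × α)), #{f : α → β | f ca.2 = σ ca.1} :=
        card_biUnion_le
    _ = _ := by simp [hfix, card_univ]

theorem Finset.sum_sum_le_of_card_filter_le {ι : Type*} (s : Finset ι) (R : ι → ι → Prop)
    [DecidableRel R] [Std.Symm R] {K : ℕ} (hK : ∀ i ∈ s, #{j ∈ s | R i j} ≤ K)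
    (c : ι → ι → ℝ) (e : ι → ℝ) (he : ∀ i ∈ s, 0 ≤ e i)
    (hc : ∀ i ∈ s, ∀ j ∈ s, c i j ≤ if R i j then (e i + e j) / 2 else 0) :
    ∑ i ∈ s, ∑ j ∈ s, c i j ≤ K * ∑ i ∈ s, e i := by
  have hsplit : ∀ i j, (if R i j then (e i + e j) / 2 else 0)
      = ((if R i j then e i else 0) + (if R j i then e j else 0)) / 2 := by
    intro i j
    simp only [Std.Symm.iff (r := R) j i]
    split_ifs <;> ring
  calc ∑ i ∈ s, ∑ j ∈ s, c i j
      ≤ ∑ i ∈ s, ∑ j ∈ s, if R i j then (e i + e j) / 2 else 0 := by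
        gcongr with i hi j hj
        exact hc i hi j hj
    _ = ∑ i ∈ s, ∑ j ∈ s, (if R i j then e i else 0) := by
        simp only [hsplit, ← sum_div, sum_add_distrib]
        rw [sum_comm (f := fun i j => if R j i then e j else 0)]
        ring
    _ = ∑ i ∈ s, #{j ∈ s | R i j} * e i := by
        simp only [← sum_filter, sum_const, nsmul_eq_mul]
    _ ≤ ∑ i ∈ s, K * e i := by
        gcongr with i hi
        · exact he i hi
        · exact_mod_cast hK i hi
    _ = K * ∑ i ∈ s, e i := (mul_sum ..).symm

section SecondMoment

variable {Ω : Type*} [MeasurableSpace Ω] {μ : Measure Ω}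

theorem integral_mul_le_half_add_integral_sq {f g : Ω → ℝ} (hf : MemLp f 2 μ)
    (hg : MemLp g 2 μ) :
    ∫ ω, f ω * g ω ∂μ ≤ ((∫ ω, f ω ^ 2 ∂μ) + ∫ ω, g ω ^ 2 ∂μ) / 2 := by
  rw [← integral_add hf.integrable_sq hg.integrable_sq, ← integral_div]
  exact integral_mono (hf.integrable_mul hg)
    ((hf.integrable_sq.add hg.integrable_sq).div_const 2)
    fun ω => by nlinarith [sq_nonneg (f ω - g ω)]

theorem integral_sq_finset_sum {ι : Type*} (s : Finset ι) {Y : ι → Ω → ℝ}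
    (hY : ∀ i ∈ s, MemLp (Y i) 2 μ) :
    ∫ ω, (∑ i ∈ s, Y i ω) ^ 2 ∂μ
      = ∑ i ∈ s, ∑ j ∈ s, ∫ ω, Y i ω * Y j ω ∂μ := by
  have hint : ∀ i ∈ s, ∀ j ∈ s, Integrable (fun ω => Y i ω * Y j ω) μ :=
    fun i hi j hj => (hY i hi).integrable_mul (hY j hj)
  simp_rw [sq, sum_mul_sum]
  rw [integral_finsetSum _ fun i hi => integrable_finsetSum _ (hint i hi)]
  exact sum_congr rfl fun i hi => integral_finsetSum _ (hint i hi)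

theorem integral_sq_finset_sum_le_of_card_filter_le {ι : Type*} (s : Finset ι)
    {Y : ι → Ω → ℝ}
    (hY : ∀ i ∈ s, MemLp (Y i) 2 μ) (R : ι → ι → Prop) [DecidableRel R] [Std.Symm R]
    (horth : ∀ i ∈ s, ∀ j ∈ s, ¬ R i j → ∫ ω, Y i ω * Y j ω ∂μ = 0)
    {K : ℕ} (hK : ∀ i ∈ s, #{j ∈ s | R i j} ≤ K) :
    ∫ ω, (∑ i ∈ s, Y i ω) ^ 2 ∂μ ≤ K * ∑ i ∈ s, ∫ ω, Y i ω ^ 2 ∂μ := by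
  rw [integral_sq_finset_sum s hY]
  refine sum_sum_le_of_card_filter_le s R hK _ _
    (fun i _ => integral_nonneg fun ω => sq_nonneg _) fun i hi j hj => ?_
  split_ifs with hij
  · exact integral_mul_le_half_add_integral_sq (hY i hi) (hY j hj)
  · exact (horth i hi j hj hij).le

end SecondMoment

theorem pooled_tetrad_sum_second_moment_bound_general
    {Ω : Type*} [MeasurableSpace Ω] (P : Measure Ω)
    (N M : ℕ)
    (X : (Fin 4 → Fin N) → Fin M → Ω → ℝ)
    (hL2 : ∀ σ m, MemLp (X σ m) 2 P)
    (hmean : ∀ σ m, ∫ ω, X σ m ω ∂P = 0)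
    (hindep : ∀ (σ σ' : Fin 4 → Fin N) (m m' : Fin M),
      (∀ a b : Fin 4, σ a ≠ σ' b) → IndepFun (X σ m) (X σ' m') P) :
    ∫ ω, (∑ m : Fin M, ∑ σ ∈ Finset.univ.filter
        (fun σ : Fin 4 → Fin N => Function.Injective σ), X σ m ω) ^ 2 ∂P
      ≤ 16 * (M : ℝ) * (N : ℝ) ^ 3 *
          ∑ m : Fin M, ∑ σ ∈ Finset.univ.filter
            (fun σ : Fin 4 → Fin N => Function.Injective σ),
              ∫ ω, (X σ m ω) ^ 2 ∂P := by
  set S : Finset (Fin 4 → Fin N) := {σ | Function.Injective σ}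
  set T : Finset (Fin M × (Fin 4 → Fin N)) := univ ×ˢ S
  have horth : ∀ p ∈ T, ∀ q ∈ T, ¬ (SharesNode on Prod.snd) p q →
      ∫ ω, X p.2 p.1 ω * X q.2 q.1 ω ∂P = 0 := by
    intro p _ q _ hpq
    simpa [hmean] using
      (hindep p.2 q.2 p.1 q.1 fun a b h => hpq ⟨a, b, h⟩).integral_mul_eq_mul_integral
      (hL2 p.2 p.1).aestronglyMeasurable (hL2 q.2 q.1).aestronglyMeasurable
  have hdeg : ∀ p ∈ T, #{q ∈ T | (SharesNode on Prod.snd) p q}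
      ≤ M * (4 * 4 * N ^ (4 - 1)) := by
    intro p _
    calc #{q ∈ T | (SharesNode on Prod.snd) p q}
        ≤ #((univ : Finset (Fin M)) ×ˢ ({f | SharesNode p.2 f} : Finset (Fin 4 → Fin N))) :=
          card_le_card fun q hq => by simp_all [onFun]
      _ ≤ M * (4 * 4 * N ^ (4 - 1)) := by
          rw [card_product, card_univ, Fintype.card_fin]
          simpa using Nat.mul_le_mul_left M (card_filter_sharesNode_le p.2)
  have key := integral_sq_finset_sum_le_of_card_filter_le T (Y := fun p => X p.2 p.1)
    (fun p _ => hL2 p.2 p.1) _ horth hdeg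
  simp only [T, sum_product] at key
  convert key using 2
  push_cast
  ring

/-- Pooled second-moment bound used for the pooled tetrad logit estimator:
for centered tetrad–cutoff statistics that are independent (across all cutoff
pairs) whenever the tetrads are node-disjoint, the second moment of the pooled
sum is at most `16 M N³` times the sum of individual second moments. -/
theorem pooled_tetrad_sum_second_moment_bound
    {Ω : Type*} [MeasurableSpace Ω] (P : Measure Ω) [IsProbabilityMeasure P]
    (N M : ℕ) (hN : 4 ≤ N) (hM : 1 ≤ M)
    (X : (Fin 4 → Fin N) → Fin M → Ω → ℝ)
    (hmeas : ∀ σ m, Measurable (X σ m))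
    (hL2 : ∀ σ m, MemLp (X σ m) 2 P)
    (hmean : ∀ σ m, ∫ ω, X σ m ω ∂P = 0)
    (hindep : ∀ (σ σ' : Fin 4 → Fin N) (m m' : Fin M),
      (∀ a b : Fin 4, σ a ≠ σ' b) → IndepFun (X σ m) (X σ' m') P) :
    ∫ ω, (∑ m : Fin M, ∑ σ ∈ Finset.univ.filter
        (fun σ : Fin 4 → Fin N => Function.Injective σ), X σ m ω) ^ 2 ∂P
      ≤ 16 * (M : ℝ) * (N : ℝ) ^ 3 *
          ∑ m : Fin M, ∑ σ ∈ Finset.univ.filter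
            (fun σ : Fin 4 → Fin N => Function.Injective σ),
              ∫ ω, (X σ m ω) ^ 2 ∂P :=
  pooled_tetrad_sum_second_moment_bound_general P N M X hL2 hmean hindep
end
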